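/- Let K ∈ ℂ^{m×m} with ‖K‖ ≤ 1 (a contraction for the operator norm). Then for every x, x' ∈ ℂ^m satisfying (K − I)x' + i(K + I)x = 0, one has Im⟨x', x⟩ ≥ 0, where ⟨·,·⟩ is the standard Hermitian inner product on ℂ^m. -/

import Mathlib

/-!
With `u = x' + i x`, the boundary condition says exactly `K u = x' - i x`. Polarization gives
`‖x' + i x‖² - ‖x' - i x‖² = 4 Im⟨x', x⟩`, and this difference is `‖u‖² - ‖K u‖² ≥ 0`.
-/

open ComplexConjugate

theorem Matrix.mulVec_add_smul_eq_sub_smul {ι R : Type*} [Fintype ι] [DecidableEq ι] [CommRing R]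
    {K : Matrix ι ι R} {c : R} {x x' : ι → R}
    (h : (K - 1).mulVec x' + c • (K + 1).mulVec x = 0) :
    K.mulVec (x' + c • x) = x' - c • x := by
  rw [Matrix.sub_mulVec, Matrix.add_mulVec, Matrix.one_mulVec, Matrix.one_mulVec] at h
  rw [Matrix.mulVec_add, Matrix.mulVec_smul, ← sub_eq_zero, ← h]
  module

theorem Complex.sq_norm_add_I_mul_sub_sq_norm_sub_I_mul (a b : ℂ) :
    ‖a + I * b‖ ^ 2 - ‖a - I * b‖ ^ 2 = 4 * (a * conj b).im := by
  simp only [Complex.sq_norm, Complex.normSq_apply, Complex.add_re, Complex.add_im,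
    Complex.sub_re, Complex.sub_im, Complex.mul_re, Complex.mul_im, Complex.I_re, Complex.I_im,
    Complex.conj_re, Complex.conj_im]
  ring

theorem Complex.sum_sq_norm_add_I_smul_sub_sum_sq_norm_sub_I_smul {ι : Type*} [Fintype ι]
    (u v : ι → ℂ) :
    ∑ j, ‖(u + I • v) j‖ ^ 2 - ∑ j, ‖(u - I • v) j‖ ^ 2 = 4 * (∑ j, u j * conj (v j)).im := by
  simp only [← Finset.sum_sub_distrib, Complex.im_sum, Finset.mul_sum, Pi.add_apply,
    Pi.sub_apply, Pi.smul_apply, smul_eq_mul, Complex.sq_norm_add_I_mul_sub_sq_norm_sub_I_mul]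

/-- If `K ∈ ℂ^{m×m}` is a contraction for the (Euclidean) operator norm, then every pair
`(x', x)` with `(K − I)x' + i(K + I)x = 0` satisfies `Im⟨x', x⟩ ≥ 0`, where
`⟨x', x⟩ = Σ_j x'_j (x_j)‾`. -/
theorem stmt15 (m : ℕ) (K : Matrix (Fin m) (Fin m) ℂ)
    (hK : ∀ v : Fin m → ℂ, ∑ j, ‖K.mulVec v j‖ ^ 2 ≤ ∑ j, ‖v j‖ ^ 2)
    (x x' : Fin m → ℂ)
    (hbc : (K - 1).mulVec x' + Complex.I • (K + 1).mulVec x = 0) :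
    0 ≤ (∑ j, x' j * (starRingEnd ℂ) (x j)).im := by
  have hcontract := hK (x' + Complex.I • x)
  rw [Matrix.mulVec_add_smul_eq_sub_smul hbc] at hcontract
  have hpolar := Complex.sum_sq_norm_add_I_smul_sub_sum_sq_norm_sub_I_smul x' x
  linarith
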